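/- Every strong component of a twin-distance-hereditary digraph is a directed co-graph. -/

import Mathlib

/-!
Induct on the construction. A pendant vertex has in- or out-degree zero, so it is a strong
component on its own, and the strong components of a disjoint union are those of its parts.
When a twin `u` of `v` is added, a strong component `C` containing `u` and some other vertex
also contains `v`, and folding `u` onto `v` turns walks in `C` into walks in `C \ {u}`. Hence
`C \ {u}` is a strong component of the smaller digraph, a directed co-graph by induction, and `C`
arises from it by adding the twin `u`. Directed co-graphs are closed under adding twins, since
a twin of `v` can be pushed into the side of a union, series or order composition containing `v`.
-/

/-- Arc relation of the induced subdigraph on a vertex set `S`. -/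
def restrict (A : ℕ → ℕ → Prop) (S : Finset ℕ) : ℕ → ℕ → Prop :=
  fun x y => A x y ∧ x ∈ S ∧ y ∈ S

/-- `walkLen A n u v`: there is a directed walk of length `n` from `u` to `v`. -/
def walkLen (A : ℕ → ℕ → Prop) : ℕ → ℕ → ℕ → Prop
  | 0, u, v => u = v
  | n + 1, u, v => ∃ w, A u w ∧ walkLen A n w v

/-- `v` is reachable from `u` by a directed walk. -/
def Reach (A : ℕ → ℕ → Prop) (u v : ℕ) : Prop :=
  ∃ n, walkLen A n u v

/-- Directed distance: length of a shortest directed walk (= shortest directed path). -/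
noncomputable def ddist (A : ℕ → ℕ → Prop) (u v : ℕ) : ℕ :=
  sInf {n | walkLen A n u v}

/-- `x` and `y` are directed twins: `N⁻(x)\{y} = N⁻(y)\{x}` and `N⁺(x)\{y} = N⁺(y)\{x}`. -/
def DTwins (A : ℕ → ℕ → Prop) (x y : ℕ) : Prop :=
  x ≠ y ∧
    {w | A w x} \ {y} = {w | A w y} \ {x} ∧
    {w | A x w} \ {y} = {w | A y w} \ {x}

/-- The arc relation obtained by adding a new vertex `u` as a directed twin of `v`;
`auv`, `avu` determine which of the arcs `(u,v)`, `(v,u)` are present (any of the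
four adjacency patterns between the twins). -/
def twinArc (A : ℕ → ℕ → Prop) (v u : ℕ) (auv avu : Prop) : ℕ → ℕ → Prop :=
  fun x y => A x y ∨ (x = u ∧ y = v ∧ auv) ∨ (x = v ∧ y = u ∧ avu) ∨
    (x = u ∧ A v y) ∨ (y = u ∧ A x v)

/-- Directed co-graphs: single vertices, disjoint union, series and order composition. -/
inductive DCo : Finset ℕ → (ℕ → ℕ → Prop) → Prop
  | single (v : ℕ) : DCo {v} (fun _ _ => False)
  | union {V₁ V₂ : Finset ℕ} {A₁ A₂ : ℕ → ℕ → Prop} :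
      Disjoint V₁ V₂ → DCo V₁ A₁ → DCo V₂ A₂ →
      DCo (V₁ ∪ V₂) (fun x y => A₁ x y ∨ A₂ x y)
  | series {V₁ V₂ : Finset ℕ} {A₁ A₂ : ℕ → ℕ → Prop} :
      Disjoint V₁ V₂ → DCo V₁ A₁ → DCo V₂ A₂ →
      DCo (V₁ ∪ V₂)
        (fun x y => A₁ x y ∨ A₂ x y ∨ (x ∈ V₁ ∧ y ∈ V₂) ∨ (x ∈ V₂ ∧ y ∈ V₁))
  | order {V₁ V₂ : Finset ℕ} {A₁ A₂ : ℕ → ℕ → Prop} :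
      Disjoint V₁ V₂ → DCo V₁ A₁ → DCo V₂ A₂ →
      DCo (V₁ ∪ V₂) (fun x y => A₁ x y ∨ A₂ x y ∨ (x ∈ V₁ ∧ y ∈ V₂))

/-- Extended directed co-graphs: additionally closed under directed union. -/
inductive ExtDCo : Finset ℕ → (ℕ → ℕ → Prop) → Prop
  | single (v : ℕ) : ExtDCo {v} (fun _ _ => False)
  | union {V₁ V₂ : Finset ℕ} {A₁ A₂ : ℕ → ℕ → Prop} :
      Disjoint V₁ V₂ → ExtDCo V₁ A₁ → ExtDCo V₂ A₂ →
      ExtDCo (V₁ ∪ V₂) (fun x y => A₁ x y ∨ A₂ x y)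
  | series {V₁ V₂ : Finset ℕ} {A₁ A₂ : ℕ → ℕ → Prop} :
      Disjoint V₁ V₂ → ExtDCo V₁ A₁ → ExtDCo V₂ A₂ →
      ExtDCo (V₁ ∪ V₂)
        (fun x y => A₁ x y ∨ A₂ x y ∨ (x ∈ V₁ ∧ y ∈ V₂) ∨ (x ∈ V₂ ∧ y ∈ V₁))
  | order {V₁ V₂ : Finset ℕ} {A₁ A₂ : ℕ → ℕ → Prop} :
      Disjoint V₁ V₂ → ExtDCo V₁ A₁ → ExtDCo V₂ A₂ →
      ExtDCo (V₁ ∪ V₂) (fun x y => A₁ x y ∨ A₂ x y ∨ (x ∈ V₁ ∧ y ∈ V₂))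
  | dUnion {V₁ V₂ : Finset ℕ} {A₁ A₂ : ℕ → ℕ → Prop} (R : ℕ → ℕ → Prop) :
      Disjoint V₁ V₂ → ExtDCo V₁ A₁ → ExtDCo V₂ A₂ →
      ExtDCo (V₁ ∪ V₂) (fun x y => A₁ x y ∨ A₂ x y ∨ (x ∈ V₁ ∧ y ∈ V₂ ∧ R x y))

/-- Digraphs constructible from single vertices by disjoint union and adding directed twins. -/
inductive TwinBuilt : Finset ℕ → (ℕ → ℕ → Prop) → Prop
  | single (v : ℕ) : TwinBuilt {v} (fun _ _ => False)
  | union {V₁ V₂ : Finset ℕ} {A₁ A₂ : ℕ → ℕ → Prop} :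
      Disjoint V₁ V₂ → TwinBuilt V₁ A₁ → TwinBuilt V₂ A₂ →
      TwinBuilt (V₁ ∪ V₂) (fun x y => A₁ x y ∨ A₂ x y)
  | twin {V : Finset ℕ} {A : ℕ → ℕ → Prop} (v u : ℕ) (auv avu : Prop) :
      v ∈ V → u ∉ V → TwinBuilt V A →
      TwinBuilt (insert u V) (twinArc A v u auv avu)

/-- Twin-distance-hereditary digraphs: built from a single vertex by disjoint union,
adding directed twins, and adding pendant plus / pendant minus vertices. -/
inductive TwinDH : Finset ℕ → (ℕ → ℕ → Prop) → Prop
  | single (v : ℕ) : TwinDH {v} (fun _ _ => False)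
  | union {V₁ V₂ : Finset ℕ} {A₁ A₂ : ℕ → ℕ → Prop} :
      Disjoint V₁ V₂ → TwinDH V₁ A₁ → TwinDH V₂ A₂ →
      TwinDH (V₁ ∪ V₂) (fun x y => A₁ x y ∨ A₂ x y)
  | twin {V : Finset ℕ} {A : ℕ → ℕ → Prop} (v u : ℕ) (auv avu : Prop) :
      v ∈ V → u ∉ V → TwinDH V A →
      TwinDH (insert u V) (twinArc A v u auv avu)
  | pendPlus {V : Finset ℕ} {A : ℕ → ℕ → Prop} (a u : ℕ) :
      a ∈ V → u ∉ V → TwinDH V A →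
      TwinDH (insert u V) (fun x y => A x y ∨ (x = u ∧ y = a))
  | pendMinus {V : Finset ℕ} {A : ℕ → ℕ → Prop} (a u : ℕ) :
      a ∈ V → u ∉ V → TwinDH V A →
      TwinDH (insert u V) (fun x y => A x y ∨ (x = a ∧ y = u))

/-- Undirected distance-hereditary graphs, via the recursive characterization:
built from a single vertex by pendant vertices, false twins and true twins. -/
inductive UDH : Finset ℕ → (ℕ → ℕ → Prop) → Prop
  | single (v : ℕ) : UDH {v} (fun _ _ => False)
  | pendant {V : Finset ℕ} {E : ℕ → ℕ → Prop} (a u : ℕ) :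
      a ∈ V → u ∉ V → UDH V E →
      UDH (insert u V) (fun x y => E x y ∨ (x = u ∧ y = a) ∨ (x = a ∧ y = u))
  | falseTwin {V : Finset ℕ} {E : ℕ → ℕ → Prop} (v u : ℕ) :
      v ∈ V → u ∉ V → UDH V E →
      UDH (insert u V) (fun x y => E x y ∨ (x = u ∧ E v y) ∨ (y = u ∧ E x v))
  | trueTwin {V : Finset ℕ} {E : ℕ → ℕ → Prop} (v u : ℕ) :
      v ∈ V → u ∉ V → UDH V E →
      UDH (insert u V)
        (fun x y => E x y ∨ (x = u ∧ E v y) ∨ (y = u ∧ E x v) ∨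
          (x = u ∧ y = v) ∨ (x = v ∧ y = u))

/-- The induced subdigraph on `C` is strongly connected. -/
def StronglyConn (A : ℕ → ℕ → Prop) (C : Finset ℕ) : Prop :=
  ∀ u ∈ C, ∀ v ∈ C, Reach (restrict A C) u v

/-- `C` is a strong component of the digraph with vertex set `V` and arcs `A`. -/
def IsStrongComponent (A : ℕ → ℕ → Prop) (V C : Finset ℕ) : Prop :=
  C.Nonempty ∧ C ⊆ V ∧ StronglyConn A C ∧
    ∀ D, C ⊆ D → D ⊆ V → StronglyConn A D → D = C

/-- The induced subdigraph on `S` is weakly connected. -/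
def WeaklyConn (A : ℕ → ℕ → Prop) (S : Finset ℕ) : Prop :=
  S.Nonempty ∧ ∀ u ∈ S, ∀ v ∈ S,
    Relation.ReflTransGen (fun x y => restrict A S x y ∨ restrict A S y x) u v

/-- The induced subdigraph on `V` is acyclic. -/
def AcyclicOn (A : ℕ → ℕ → Prop) (V : Finset ℕ) : Prop :=
  ∀ v ∈ V, ∀ n, 0 < n → ¬ walkLen (restrict A V) n v v

/-- `CRle A V r`: the cycle rank of the digraph `(V, A)` is at most `r`.
This is the standard recursive definition: acyclic digraphs have rank 0, digraphs
decompose into their strong components, and deleting a vertex decreases rank by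
at most one. -/
inductive CRle (A : ℕ → ℕ → Prop) : Finset ℕ → ℕ → Prop
  | base {V : Finset ℕ} {r : ℕ} : AcyclicOn A V → CRle A V r
  | scc {V : Finset ℕ} {r : ℕ} :
      (∀ C, IsStrongComponent A V C → CRle A C r) → CRle A V r
  | step {V : Finset ℕ} {r : ℕ} (v : ℕ) :
      v ∈ V → CRle A (V.erase v) r → CRle A V (r + 1)

/-- The cycle rank of the digraph `(V, A)`. -/
noncomputable def cycleRank (A : ℕ → ℕ → Prop) (V : Finset ℕ) : ℕ :=
  sInf {r | CRle A V r}

/-- `CW k V A f`: the `k`-labeled digraph with vertices `V`, arcs `A` and labeling `f`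
is constructible by a directed clique-width `k`-expression. -/
inductive CW (k : ℕ) : Finset ℕ → (ℕ → ℕ → Prop) → (ℕ → Fin k) → Prop
  | vertex (v : ℕ) (a : Fin k) : CW k {v} (fun _ _ => False) (fun _ => a)
  | union {V₁ V₂ : Finset ℕ} {A₁ A₂ : ℕ → ℕ → Prop} {f₁ f₂ : ℕ → Fin k} :
      Disjoint V₁ V₂ → CW k V₁ A₁ f₁ → CW k V₂ A₂ f₂ →
      CW k (V₁ ∪ V₂) (fun x y => A₁ x y ∨ A₂ x y)
        (fun x => if x ∈ V₁ then f₁ x else f₂ x)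
  | addArcs {V : Finset ℕ} {A : ℕ → ℕ → Prop} {f : ℕ → Fin k} (a b : Fin k) :
      a ≠ b → CW k V A f →
      CW k V (fun x y => A x y ∨ (x ∈ V ∧ y ∈ V ∧ f x = a ∧ f y = b)) f
  | relabel {V : Finset ℕ} {A : ℕ → ℕ → Prop} {f : ℕ → Fin k} (a b : Fin k) :
      CW k V A f →
      CW k V A (fun x => if f x = a then b else f x)

open Relation

def ArcsWithin (A : ℕ → ℕ → Prop) (V : Finset ℕ) : Prop :=
  ∀ x y, A x y → x ∈ V ∧ y ∈ V

theorem reach_iff_reflTransGen {R : ℕ → ℕ → Prop} {u v : ℕ} :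
    Reach R u v ↔ ReflTransGen R u v := by
  constructor
  · rintro ⟨n, hn⟩
    induction n generalizing u with
    | zero => exact (show u = v from hn) ▸ ReflTransGen.refl
    | succ n ih =>
      obtain ⟨w, huw, hw⟩ := hn
      exact ReflTransGen.head huw (ih hw)
  · intro h
    induction h using ReflTransGen.head_induction_on with
    | refl => exact ⟨0, rfl⟩
    | head huw _ ih =>
      obtain ⟨n, hn⟩ := ih
      exact ⟨n + 1, _, huw, hn⟩

theorem stronglyConn_iff {A : ℕ → ℕ → Prop} {C : Finset ℕ} :
    StronglyConn A C ↔ ∀ u ∈ C, ∀ v ∈ C, ReflTransGen (restrict A C) u v := by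
  simp only [StronglyConn, reach_iff_reflTransGen]

theorem restrict_mono {A B : ℕ → ℕ → Prop} {S T : Finset ℕ} (hAB : ∀ x y, A x y → B x y)
    (hST : S ⊆ T) : restrict A S ≤ restrict B T :=
  fun _ _ ⟨hxy, hx, hy⟩ => ⟨hAB _ _ hxy, hST hx, hST hy⟩

theorem restrict_congr {A B : ℕ → ℕ → Prop} {S : Finset ℕ}
    (h : ∀ x ∈ S, ∀ y ∈ S, A x y ↔ B x y) : restrict A S = restrict B S := by
  funext x y
  exact propext ⟨fun ⟨hxy, hx, hy⟩ => ⟨(h x hx y hy).1 hxy, hx, hy⟩,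
    fun ⟨hxy, hx, hy⟩ => ⟨(h x hx y hy).2 hxy, hx, hy⟩⟩

theorem mem_of_reflTransGen {R : ℕ → ℕ → Prop} {S : Finset ℕ} (hS : ∀ x y, R x y → x ∈ S → y ∈ S)
    {a b : ℕ} (hab : ReflTransGen R a b) (ha : a ∈ S) : b ∈ S := by
  induction hab with
  | refl => exact ha
  | tail _ hbc ih => exact hS _ _ hbc ih

namespace StronglyConn

variable {A : ℕ → ℕ → Prop} {C : Finset ℕ}

theorem mono {B : ℕ → ℕ → Prop} (hAB : ∀ x y, A x y → B x y) (hC : StronglyConn A C) :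
    StronglyConn B C := by
  rw [stronglyConn_iff] at hC ⊢
  exact fun a ha b hb => ReflTransGen.mono (restrict_mono hAB subset_rfl) _ _ (hC a ha b hb)

theorem insert_of_reflTransGen (hC : StronglyConn A C) {x w : ℕ} (hw : w ∈ C)
    (hxw : ReflTransGen (restrict A (insert x C)) x w)
    (hwx : ReflTransGen (restrict A (insert x C)) w x) : StronglyConn A (insert x C) := by
  rw [stronglyConn_iff] at hC ⊢
  have hlift : ∀ a ∈ C, ∀ b ∈ C, ReflTransGen (restrict A (insert x C)) a b :=
    fun a ha b hb =>
      ReflTransGen.mono (restrict_mono (fun _ _ h => h) (Finset.subset_insert x C)) _ _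
        (hC a ha b hb)
  intro a ha b hb
  rcases Finset.mem_insert.1 ha with rfl | haC <;> rcases Finset.mem_insert.1 hb with rfl | hbC
  · exact ReflTransGen.refl
  · exact hxw.trans (hlift w hw b hbC)
  · exact (hlift a haC w hw).trans hwx
  · exact hlift a haC b hbC

theorem eq_singleton_of_forall_not_arc_into (hC : StronglyConn A C) {u : ℕ} (hu : u ∈ C)
    (hin : ∀ x, ¬ A x u) : C = {u} := by
  refine Finset.eq_singleton_iff_unique_mem.2 ⟨hu, fun w hw => ?_⟩
  rcases (stronglyConn_iff.1 hC w hw u hu).cases_tail with h | ⟨x, _, hxu, _⟩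
  · exact h.symm
  · exact (hin x hxu).elim

theorem eq_singleton_of_forall_not_arc_from (hC : StronglyConn A C) {u : ℕ} (hu : u ∈ C)
    (hout : ∀ y, ¬ A u y) : C = {u} := by
  refine Finset.eq_singleton_iff_unique_mem.2 ⟨hu, fun w hw => ?_⟩
  rcases (stronglyConn_iff.1 hC u hu w hw).cases_head with h | ⟨y, ⟨huy, _⟩, _⟩
  · exact h.symm
  · exact (hout y huy).elim

end StronglyConn

theorem IsStrongComponent.of_subset {A B : ℕ → ℕ → Prop} {V W C : Finset ℕ}
    (hC : IsStrongComponent A V C) (hCW : C ⊆ W) (hWV : W ⊆ V)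
    (hAB : ∀ x ∈ W, ∀ y ∈ W, A x y ↔ B x y) : IsStrongComponent B W C := by
  obtain ⟨hne, -, hconn, hmax⟩ := hC
  have hres : ∀ D ⊆ W, restrict A D = restrict B D :=
    fun D hD => restrict_congr fun x hx y hy => hAB x (hD hx) y (hD hy)
  refine ⟨hne, hCW, ?_, fun D hCD hDW hD => hmax D hCD (hDW.trans hWV) ?_⟩
  · simpa only [StronglyConn, hres C hCW] using hconn
  · simpa only [StronglyConn, hres D hDW] using hD

/-- Arcs of the composition of `(V₁, A₁)` and `(V₂, A₂)` with all arcs `V₁ → V₂` when `p` and all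
arcs `V₂ → V₁` when `q`: disjoint union, order and series composition are the cases `p, q` false
or true. -/
def joinArc (V₁ V₂ : Finset ℕ) (A₁ A₂ : ℕ → ℕ → Prop) (p q : Prop) : ℕ → ℕ → Prop :=
  fun x y => A₁ x y ∨ A₂ x y ∨ (x ∈ V₁ ∧ y ∈ V₂ ∧ p) ∨ (x ∈ V₂ ∧ y ∈ V₁ ∧ q)

theorem joinArc_comm (V₁ V₂ : Finset ℕ) (A₁ A₂ : ℕ → ℕ → Prop) (p q : Prop) :
    joinArc V₁ V₂ A₁ A₂ p q = joinArc V₂ V₁ A₂ A₁ q p := by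
  ext x y
  simp only [joinArc]
  tauto

namespace DCo

theorem join {V₁ V₂ : Finset ℕ} {A₁ A₂ : ℕ → ℕ → Prop} (p q : Prop) (hd : Disjoint V₁ V₂)
    (h₁ : DCo V₁ A₁) (h₂ : DCo V₂ A₂) : DCo (V₁ ∪ V₂) (joinArc V₁ V₂ A₁ A₂ p q) := by
  by_cases hp : p <;> by_cases hq : q
  · convert DCo.series hd h₁ h₂ using 1
    funext x y; simp only [joinArc, hp, hq, and_true]
  · convert DCo.order hd h₁ h₂ using 1
    funext x y; simp only [joinArc, hp, hq, and_true, and_false, or_false]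
  · rw [Finset.union_comm, joinArc_comm]
    convert DCo.order hd.symm h₂ h₁ using 1
    funext x y; simp only [joinArc, hp, hq, and_true, and_false, or_false]
  · convert DCo.union hd h₁ h₂ using 1
    funext x y; simp only [joinArc, hp, hq, and_false, or_false]

theorem induction_on_join {P : Finset ℕ → (ℕ → ℕ → Prop) → Prop}
    (single : ∀ v, P {v} (fun _ _ => False))
    (join : ∀ (V₁ V₂ : Finset ℕ) (A₁ A₂ : ℕ → ℕ → Prop) (p q : Prop), Disjoint V₁ V₂ →
      DCo V₁ A₁ → DCo V₂ A₂ → P V₁ A₁ → P V₂ A₂ → P (V₁ ∪ V₂) (joinArc V₁ V₂ A₁ A₂ p q))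
    {V : Finset ℕ} {A : ℕ → ℕ → Prop} (h : DCo V A) : P V A := by
  induction h with
  | single v => exact single v
  | @union V₁ V₂ A₁ A₂ hd h₁ h₂ ih₁ ih₂ =>
    convert join V₁ V₂ A₁ A₂ False False hd h₁ h₂ ih₁ ih₂ using 1
    funext x y; simp only [joinArc, and_false, or_false]
  | @series V₁ V₂ A₁ A₂ hd h₁ h₂ ih₁ ih₂ =>
    convert join V₁ V₂ A₁ A₂ True True hd h₁ h₂ ih₁ ih₂ using 1
    funext x y; simp only [joinArc, and_true]
  | @order V₁ V₂ A₁ A₂ hd h₁ h₂ ih₁ ih₂ =>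
    convert join V₁ V₂ A₁ A₂ True False hd h₁ h₂ ih₁ ih₂ using 1
    funext x y; simp only [joinArc, and_true, and_false, or_false]

theorem arcsWithin {V : Finset ℕ} {A : ℕ → ℕ → Prop} (h : DCo V A) : ArcsWithin A V := by
  refine induction_on_join (P := fun V A => ArcsWithin A V) (fun _ _ _ h => h.elim) ?_ h
  intro V₁ V₂ A₁ A₂ p q _ _ _ ih₁ ih₂
  rintro x y (h | h | ⟨hx, hy, -⟩ | ⟨hx, hy, -⟩)
  · exact (ih₁ x y h).imp (Finset.mem_union_left _) (Finset.mem_union_left _)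
  · exact (ih₂ x y h).imp (Finset.mem_union_right _) (Finset.mem_union_right _)
  · exact ⟨Finset.mem_union_left _ hx, Finset.mem_union_right _ hy⟩
  · exact ⟨Finset.mem_union_right _ hx, Finset.mem_union_left _ hy⟩

end DCo

theorem twinArc_joinArc_of_mem_left {V₁ V₂ : Finset ℕ} {A₁ A₂ : ℕ → ℕ → Prop} {p q : Prop}
    {v : ℕ} (u : ℕ) (auv avu : Prop) (hv₁ : v ∈ V₁) (hv₂ : v ∉ V₂) (h₂ : ArcsWithin A₂ V₂) :
    twinArc (joinArc V₁ V₂ A₁ A₂ p q) v u auv avu =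
      joinArc (insert u V₁) V₂ (twinArc A₁ v u auv avu) A₂ p q := by
  have hout : ∀ y, ¬ A₂ v y := fun y h => hv₂ (h₂ v y h).1
  have hin : ∀ x, ¬ A₂ x v := fun x h => hv₂ (h₂ x v h).2
  ext x y
  simp only [twinArc, joinArc, Finset.mem_insert, hv₁, hv₂, hout, hin, false_or, true_and,
    false_and, and_false, or_false]
  grind

namespace DCo

theorem twin_joinArc_of_mem_left {V₁ V₂ : Finset ℕ} {A₁ A₂ : ℕ → ℕ → Prop} (p q : Prop)
    {v u : ℕ} (auv avu : Prop) (hd : Disjoint V₁ V₂) (hv : v ∈ V₁) (hu : u ∉ V₁ ∪ V₂)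
    (h₁ : DCo (insert u V₁) (twinArc A₁ v u auv avu)) (h₂ : DCo V₂ A₂) :
    DCo (insert u (V₁ ∪ V₂)) (twinArc (joinArc V₁ V₂ A₁ A₂ p q) v u auv avu) := by
  have hd' : Disjoint (insert u V₁) V₂ :=
    Finset.disjoint_insert_left.2 ⟨fun h => hu (Finset.mem_union_right _ h), hd⟩
  rw [twinArc_joinArc_of_mem_left u auv avu hv (Finset.disjoint_left.1 hd hv) h₂.arcsWithin,
    ← Finset.insert_union]
  exact join p q hd' h₁ h₂

theorem twin {V : Finset ℕ} {A : ℕ → ℕ → Prop} (h : DCo V A) (auv avu : Prop) :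
    ∀ v ∈ V, ∀ u ∉ V, DCo (insert u V) (twinArc A v u auv avu) := by
  refine induction_on_join (P := fun V A => ∀ v ∈ V, ∀ u ∉ V,
    DCo (insert u V) (twinArc A v u auv avu)) ?_ ?_ h
  · intro w v hv u hu
    rw [Finset.mem_singleton.1 hv, Finset.insert_eq]
    convert join auv avu (Finset.disjoint_singleton_left.2 hu) (single u) (single w) using 1
    ext x y
    simp only [twinArc, joinArc, Finset.mem_singleton, false_or, and_false, or_false]
  · intro V₁ V₂ A₁ A₂ p q hd h₁ h₂ ih₁ ih₂ v hv u hu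
    have hu₁ : u ∉ V₁ := fun h => hu (Finset.mem_union_left _ h)
    have hu₂ : u ∉ V₂ := fun h => hu (Finset.mem_union_right _ h)
    rcases Finset.mem_union.1 hv with hv₁ | hv₂
    · exact twin_joinArc_of_mem_left p q auv avu hd hv₁ hu (ih₁ v hv₁ u hu₁) h₂
    · rw [joinArc_comm, Finset.union_comm]
      exact twin_joinArc_of_mem_left q p auv avu hd.symm hv₂ (Finset.union_comm V₁ V₂ ▸ hu)
        (ih₂ v hv₂ u hu₂) h₁

end DCo

section Twin

variable {B : ℕ → ℕ → Prop} {W : Finset ℕ} {v u : ℕ} {auv avu : Prop}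

theorem twinArc_update_id (hB : ArcsWithin B W) (hu : u ∉ W) {x y : ℕ}
    (h : twinArc B v u auv avu x y) :
    Function.update id u v x = Function.update id u v y ∨
      B (Function.update id u v x) (Function.update id u v y) := by
  have hne : ∀ {x y}, B x y → x ≠ u ∧ y ≠ u := fun hxy =>
    ⟨fun e => hu (e ▸ (hB _ _ hxy).1), fun e => hu (e ▸ (hB _ _ hxy).2)⟩
  rcases h with hxy | ⟨rfl, rfl, -⟩ | ⟨rfl, rfl, -⟩ | ⟨rfl, hvy⟩ | ⟨rfl, hxv⟩
  · simp only [Function.update_of_ne (hne hxy).1, Function.update_of_ne (hne hxy).2, id, hxy,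
      or_true]
  · simp [Function.update_apply]
  · simp [Function.update_apply]
  · simp only [Function.update_self, Function.update_of_ne (hne hvy).2, id, hvy, or_true]
  · simp only [Function.update_self, Function.update_of_ne (hne hxv).1, id, hxv, or_true]

theorem reflTransGen_twinArc_update_id (hB : ArcsWithin B W) (hu : u ∉ W) {S T : Finset ℕ}
    (hST : ∀ x ∈ S, Function.update id u v x ∈ T) {a b : ℕ}
    (h : ReflTransGen (restrict (twinArc B v u auv avu) S) a b) :
    ReflTransGen (restrict B T) (Function.update id u v a) (Function.update id u v b) := by
  refine ReflTransGen.lift' _ (fun x y ⟨hxy, hx, hy⟩ => ?_) _ _ h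
  rcases twinArc_update_id hB hu hxy with heq | harc
  · simp only [Function.onFun, heq, ReflTransGen.refl]
  · exact ReflTransGen.single ⟨harc, hST x hx, hST y hy⟩

namespace IsStrongComponent

variable {C : Finset ℕ}

theorem twin_mem (hB : ArcsWithin B W) (hv : v ∈ W) (hu : u ∉ W)
    (hC : IsStrongComponent (twinArc B v u auv avu) (insert u W) C) (huC : u ∈ C) {w : ℕ}
    (hw : w ∈ C) (hwu : w ≠ u) : v ∈ C := by
  obtain ⟨-, hCV, hconn, hmax⟩ := hC
  have hST : ∀ x ∈ C, Function.update id u v x ∈ insert v C := fun x hx => by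
    rcases eq_or_ne x u with rfl | hxu
    · simp
    · simp [Function.update_of_ne hxu, hx]
  have hlift : ∀ {a b}, ReflTransGen (restrict (twinArc B v u auv avu) C) a b →
      ReflTransGen (restrict (twinArc B v u auv avu) (insert v C))
        (Function.update id u v a) (Function.update id u v b) := fun h =>
    ReflTransGen.mono (restrict_mono (fun _ _ => Or.inl) subset_rfl) _ _
      (reflTransGen_twinArc_update_id hB hu hST h)
  have hfix : Function.update id u v w = w := Function.update_of_ne hwu _ _
  have hvw := hlift (stronglyConn_iff.1 hconn u huC w hw)
  have hwv := hlift (stronglyConn_iff.1 hconn w hw u huC)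
  rw [Function.update_self, hfix] at hvw hwv
  have hins : insert v C = C :=
    hmax _ (Finset.subset_insert v C) (Finset.insert_subset (Finset.mem_insert_of_mem hv) hCV)
      (hconn.insert_of_reflTransGen hw hvw hwv)
  exact hins ▸ Finset.mem_insert_self v C

theorem erase_twin (hB : ArcsWithin B W) (hv : v ∈ W) (hu : u ∉ W)
    (hC : IsStrongComponent (twinArc B v u auv avu) (insert u W) C) (huC : u ∈ C) (hvC : v ∈ C) :
    IsStrongComponent B W (C.erase u) := by
  obtain ⟨-, hCV, hconn, hmax⟩ := hC
  have hvu : v ≠ u := fun e => hu (e ▸ hv)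
  have hv₀ : v ∈ C.erase u := Finset.mem_erase.2 ⟨hvu, hvC⟩
  have hC₀W : C.erase u ⊆ W := fun x hx =>
    (Finset.mem_insert.1 (hCV (Finset.mem_of_mem_erase hx))).resolve_left
      (Finset.ne_of_mem_erase hx)
  refine ⟨⟨v, hv₀⟩, hC₀W, ?_, fun D hC₀D hDW hD => ?_⟩
  · have hST : ∀ x ∈ C, Function.update id u v x ∈ C.erase u := fun x hx => by
      rcases eq_or_ne x u with rfl | hxu
      · simpa using hv₀
      · simpa [Function.update_of_ne hxu] using Finset.mem_erase.2 ⟨hxu, hx⟩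
    refine stronglyConn_iff.2 fun a ha b hb => ?_
    have := reflTransGen_twinArc_update_id hB hu hST
      (stronglyConn_iff.1 hconn a (Finset.mem_of_mem_erase ha) b (Finset.mem_of_mem_erase hb))
    rwa [Function.update_of_ne (Finset.ne_of_mem_erase ha),
      Function.update_of_ne (Finset.ne_of_mem_erase hb)] at this
  · have huD : u ∉ D := fun h => hu (hDW h)
    have hCD : C ⊆ insert u D := by
      rw [← Finset.insert_erase huC]
      exact Finset.insert_subset_insert u hC₀D
    have hreach : ∀ a ∈ C, ∀ b ∈ C,
        ReflTransGen (restrict (twinArc B v u auv avu) (insert u D)) a b := fun a ha b hb =>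
      ReflTransGen.mono (restrict_mono (fun _ _ h => h) hCD) _ _
        (stronglyConn_iff.1 hconn a ha b hb)
    have hins : insert u D = C :=
      hmax _ hCD (Finset.insert_subset_insert u hDW)
        ((hD.mono fun _ _ => Or.inl).insert_of_reflTransGen (hC₀D hv₀)
          (hreach u huC v hvC) (hreach v hvC u huC))
    rw [← hins, Finset.erase_insert huD]

end IsStrongComponent

theorem restrict_twinArc_insert (hB : ArcsWithin B W) (hu : u ∉ W) {S : Finset ℕ} (hv : v ∈ S) :
    restrict (twinArc B v u auv avu) (insert u S) = twinArc (restrict B S) v u auv avu := by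
  have hout : ∀ y, ¬ B u y := fun y h => hu (hB u y h).1
  have hin : ∀ x, ¬ B x u := fun x h => hu (hB x u h).2
  ext x y
  simp only [restrict, twinArc, Finset.mem_insert]
  grind

end Twin

theorem TwinDH.arcsWithin {V : Finset ℕ} {A : ℕ → ℕ → Prop} (h : TwinDH V A) :
    ArcsWithin A V := by
  induction h with
  | single v => exact fun _ _ h => h.elim
  | union _ _ _ ih₁ ih₂ =>
    rintro x y (h | h)
    · exact (ih₁ x y h).imp (Finset.mem_union_left _) (Finset.mem_union_left _)
    · exact (ih₂ x y h).imp (Finset.mem_union_right _) (Finset.mem_union_right _)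
  | twin =>
    rintro x y (h | ⟨rfl, rfl, -⟩ | ⟨rfl, rfl, -⟩ | ⟨rfl, h⟩ | ⟨rfl, h⟩) <;>
      grind [ArcsWithin]
  | pendPlus =>
    rintro x y (h | ⟨rfl, rfl⟩) <;> grind [ArcsWithin]
  | pendMinus =>
    rintro x y (h | ⟨rfl, rfl⟩) <;> grind [ArcsWithin]

theorem dco_restrict_singleton {A : ℕ → ℕ → Prop} {x : ℕ} (hx : ¬ A x x) :
    DCo {x} (restrict A {x}) := by
  convert DCo.single x using 1
  ext a b
  simp only [restrict, Finset.mem_singleton, iff_false, not_and]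
  rintro hab rfl rfl
  exact hx hab

def ComponentsDCo (A : ℕ → ℕ → Prop) (V : Finset ℕ) : Prop :=
  ∀ C, IsStrongComponent A V C → DCo C (restrict A C)

namespace ComponentsDCo

variable {A B : ℕ → ℕ → Prop} {V W C : Finset ℕ}

theorem dco_of_subset (ih : ComponentsDCo B W) (hC : IsStrongComponent A V C) (hCW : C ⊆ W)
    (hWV : W ⊆ V) (hAB : ∀ x ∈ W, ∀ y ∈ W, A x y ↔ B x y) : DCo C (restrict A C) := by
  rw [restrict_congr fun x hx y hy => hAB x (hCW hx) y (hCW hy)]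
  exact ih C (hC.of_subset hCW hWV hAB)

theorem dco_of_forall_arc_mem (ih : ComponentsDCo B W) (hC : IsStrongComponent A V C)
    (hWV : W ⊆ V) (hAB : ∀ x ∈ W, ∀ y ∈ W, A x y ↔ B x y)
    (hclosed : ∀ x y, A x y → x ∈ W → y ∈ W) {c : ℕ} (hc : c ∈ C) (hcW : c ∈ W) :
    DCo C (restrict A C) := by
  refine ih.dco_of_subset hC (fun x hx => ?_) hWV hAB
  exact mem_of_reflTransGen (fun a b hab => hclosed a b hab.1)
    (stronglyConn_iff.1 hC.2.2.1 c hc x hx) hcW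

theorem dco_of_not_mem (ih : ComponentsDCo B W) {u : ℕ} (hC : IsStrongComponent A (insert u W) C)
    (huC : u ∉ C) (hAB : ∀ x ∈ W, ∀ y ∈ W, A x y ↔ B x y) : DCo C (restrict A C) :=
  ih.dco_of_subset hC
    (fun _ hx => (Finset.mem_insert.1 (hC.2.1 hx)).resolve_left (ne_of_mem_of_not_mem hx huC))
    (Finset.subset_insert u W) hAB

theorem single (v : ℕ) : ComponentsDCo (fun _ _ => False) {v} := by
  intro C hC
  obtain ⟨⟨c, hc⟩, hCv, -⟩ := hC
  rw [Finset.eq_singleton_iff_unique_mem.2 ⟨Finset.mem_singleton.1 (hCv hc) ▸ hc,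
    fun _ hx => Finset.mem_singleton.1 (hCv hx)⟩]
  exact dco_restrict_singleton not_false

theorem union {V₁ V₂ : Finset ℕ} {A₁ A₂ : ℕ → ℕ → Prop} (hd : Disjoint V₁ V₂)
    (h₁ : ArcsWithin A₁ V₁) (h₂ : ArcsWithin A₂ V₂) (ih₁ : ComponentsDCo A₁ V₁)
    (ih₂ : ComponentsDCo A₂ V₂) : ComponentsDCo (fun x y => A₁ x y ∨ A₂ x y) (V₁ ∪ V₂) := by
  intro C hC
  have hV₁ : ∀ x ∈ V₁, x ∉ V₂ := fun _ hx => Finset.disjoint_left.1 hd hx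
  have hV₂ : ∀ x ∈ V₂, x ∉ V₁ := fun _ hx => Finset.disjoint_right.1 hd hx
  obtain ⟨c, hc⟩ := hC.1
  rcases Finset.mem_union.1 (hC.2.1 hc) with hc₁ | hc₂
  · refine ih₁.dco_of_forall_arc_mem hC Finset.subset_union_left
      (fun x hx y _ => or_iff_left fun h => hV₁ x hx (h₂ x y h).1) ?_ hc hc₁
    rintro x y (h | h) hx
    exacts [(h₁ x y h).2, absurd (h₂ x y h).1 (hV₁ x hx)]
  · refine ih₂.dco_of_forall_arc_mem hC Finset.subset_union_right
      (fun x hx y _ => or_iff_right fun h => hV₂ x hx (h₁ x y h).1) ?_ hc hc₂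
    rintro x y (h | h) hx
    exacts [absurd (h₁ x y h).1 (hV₂ x hx), (h₂ x y h).2]

theorem pendPlus (hB : ArcsWithin B W) {a u : ℕ} (ha : a ∈ W) (hu : u ∉ W)
    (ih : ComponentsDCo B W) : ComponentsDCo (fun x y => B x y ∨ (x = u ∧ y = a)) (insert u W) := by
  have hau : a ≠ u := fun e => hu (e ▸ ha)
  intro C hC
  by_cases huC : u ∈ C
  · have hin : ∀ x, ¬ (B x u ∨ (x = u ∧ u = a)) :=
      fun x h => h.elim (fun h => hu (hB x u h).2) fun h => hau h.2.symm
    rw [hC.2.2.1.eq_singleton_of_forall_not_arc_into huC hin]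
    exact dco_restrict_singleton (hin u)
  · exact ih.dco_of_not_mem hC huC fun x hx y _ => or_iff_left fun h => hu (h.1 ▸ hx)

theorem pendMinus (hB : ArcsWithin B W) {a u : ℕ} (ha : a ∈ W) (hu : u ∉ W)
    (ih : ComponentsDCo B W) : ComponentsDCo (fun x y => B x y ∨ (x = a ∧ y = u)) (insert u W) := by
  have hau : a ≠ u := fun e => hu (e ▸ ha)
  intro C hC
  by_cases huC : u ∈ C
  · have hout : ∀ y, ¬ (B u y ∨ (u = a ∧ y = u)) :=
      fun y h => h.elim (fun h => hu (hB u y h).1) fun h => hau h.1.symm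
    rw [hC.2.2.1.eq_singleton_of_forall_not_arc_from huC hout]
    exact dco_restrict_singleton (hout u)
  · exact ih.dco_of_not_mem hC huC fun x _ y hy => or_iff_left fun h => hu (h.2 ▸ hy)

theorem twin (hB : ArcsWithin B W) {v u : ℕ} (auv avu : Prop) (hv : v ∈ W) (hu : u ∉ W)
    (ih : ComponentsDCo B W) : ComponentsDCo (twinArc B v u auv avu) (insert u W) := by
  have hvu : v ≠ u := fun e => hu (e ▸ hv)
  intro C hC
  by_cases huC : u ∈ C
  · by_cases hCu : C = {u}
    · subst hCu
      refine dco_restrict_singleton ?_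
      rintro (h | ⟨-, e, -⟩ | ⟨e, -⟩ | ⟨-, h⟩ | ⟨-, h⟩)
      exacts [hu (hB u u h).1, hvu e.symm, hvu e.symm, hu (hB v u h).2, hu (hB u v h).1]
    obtain ⟨w, hw, hwu⟩ : ∃ w ∈ C, w ≠ u := by
      by_contra! h
      exact hCu (Finset.eq_singleton_iff_unique_mem.2 ⟨huC, h⟩)
    have hvC := hC.twin_mem hB hv hu huC hw hwu
    have hv₀ : v ∈ C.erase u := Finset.mem_erase.2 ⟨hvu, hvC⟩
    have hdco := (ih _ (hC.erase_twin hB hv hu huC hvC)).twin auv avu v hv₀ u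
      (Finset.notMem_erase u C)
    rwa [← restrict_twinArc_insert hB hu hv₀, Finset.insert_erase huC] at hdco
  · refine ih.dco_of_not_mem hC huC fun x hx y hy => ?_
    have hxu : x ≠ u := fun e => hu (e ▸ hx)
    have hyu : y ≠ u := fun e => hu (e ▸ hy)
    simp only [twinArc, hxu, hyu, false_and, and_false, or_false]

end ComponentsDCo

theorem stmt_5 (V : Finset ℕ) (A : ℕ → ℕ → Prop) (h : TwinDH V A)
    (C : Finset ℕ) (hC : IsStrongComponent A V C) :
    DCo C (restrict A C) := by
  induction h generalizing C with
  | single v => exact ComponentsDCo.single v C hC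
  | union hd h₁ h₂ ih₁ ih₂ =>
    exact ComponentsDCo.union hd h₁.arcsWithin h₂.arcsWithin ih₁ ih₂ C hC
  | twin v u auv avu hv hu hB ih => exact ComponentsDCo.twin hB.arcsWithin auv avu hv hu ih C hC
  | pendPlus a u ha hu hB ih => exact ComponentsDCo.pendPlus hB.arcsWithin ha hu ih C hC
  | pendMinus a u ha hu hB ih => exact ComponentsDCo.pendMinus hB.arcsWithin ha hu ih C hC
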